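/- arXiv:math/0512559 — 2 statements merged into one kernel-verified Lean document; each statement's English description precedes it below -/
import Mathlib

section
/- Let L be a nonempty set, C a finite consequence operator on L, and RI* the logic-system defined from C (with R¹ = C(∅) and, for each nonempty finite X = {x₁,…,xₙ} ⊆ L with C(X) ≠ X ∪ R¹, the tuples (x₁,…,xₙ,y) for y ∈ C(X) − (X ∪ R¹)). Then for every X ⊆ L and every x ∈ C(X), x is deducible from X via RI*; that is, C(X) ⊆ C*(X), where C* is the operator generated by RI*. -/
/-!
A general logic-system `RI` on a language `L` is encoded as a set of nonempty
lists over `L`: a list `[a₁, …, aₙ]` with `n ≥ 2` is an `n`-ary rule allowing the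
deduction of `aₙ` once `a₁, …, a_{n-1}` have been obtained, and a singleton
`[a]` records that `a` is a member of a unary relation, i.e. an axiom.
(A collection of `n`-ary relations `Rⁿ ⊆ Lⁿ` is identified with the set of all
its tuples, encoded as lists.)
-/

/-- `bs = [b₁, …, b_m]` is an `RI`-deduction from `X`: each step `b_j` is in `X`,
or is an axiom (member of a unary relation of `RI`), or is the last coordinate
of a tuple `(a₁, …, aₙ) ∈ RI` whose first `n-1` coordinates all lie in `X`
together with the axioms and the previous steps `b₁, …, b_{j-1}`. -/
def IsDeduction {L : Type*} (RI : Set (List L)) (X : Set L) (bs : List L) : Prop :=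
  ∀ j : Fin bs.length,
    bs.get j ∈ X ∨ [bs.get j] ∈ RI ∨
      ∃ l : List L, l ≠ [] ∧ l ++ [bs.get j] ∈ RI ∧
        ∀ b ∈ l, b ∈ X ∨ [b] ∈ RI ∨ b ∈ bs.take j.1

/-- The operator generated by the logic-system `RI`: it sends `X ⊆ L` to the set
of all elements of `L` deducible from `X` by a finite-step `RI`-deduction. -/
def genOp {L : Type*} (RI : Set (List L)) (X : Set L) : Set L :=
  {a | ∃ bs : List L, IsDeduction RI X bs ∧ a ∈ bs}

/-- The logic-system `RI*` defined from an operator `C`: its unary relation is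
`R¹ = C(∅)`, and for each nonempty finite `X ⊆ L` with `|X| = n` and each
enumeration `X = {x₁, …, xₙ}` (a nodup list `xs`), it contains the
`(n+1)`-tuples `(x₁, …, xₙ, y)` for `y ∈ C(X) − (X ∪ R¹)` (so when
`C(X) = X ∪ R¹` no tuple arises from `X`, i.e. the relation is `∅` there). -/
def RIstar {L : Type*} (C : Set L → Set L) : Set (List L) :=
  {l | ∃ a ∈ C ∅, l = [a]} ∪
    {l | ∃ (xs : List L) (y : L), xs ≠ [] ∧ xs.Nodup ∧
      y ∈ C {x | x ∈ xs} \ ({x | x ∈ xs} ∪ C ∅) ∧ l = xs ++ [y]}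

/-!
Every `x ∈ C(X)` already lies in `C(A)` for a finite `A ⊆ X`. If `x ∈ A` or `x ∈ C(∅)`
it is deducible in one step; otherwise `A` is nonempty and `RI*` contains the rule
`(a₁, …, aₙ, x)` for an enumeration of `A`, whose premises all lie in `X`.
-/

section genOp

variable {L : Type*} {RI : Set (List L)} {X : Set L}

theorem subset_genOp : X ⊆ genOp RI X :=
  fun a ha => ⟨[a], fun _ => Or.inl (by simpa using ha), List.mem_singleton_self a⟩

theorem mem_genOp_of_singleton_mem {a : L} (ha : [a] ∈ RI) : a ∈ genOp RI X :=
  ⟨[a], fun _ => Or.inr (Or.inl (by simpa using ha)), List.mem_singleton_self a⟩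

theorem mem_genOp_of_rule {l : List L} {b : L} (hl : l ≠ []) (hrule : l ++ [b] ∈ RI)
    (hlX : ∀ a ∈ l, a ∈ X) : b ∈ genOp RI X :=
  ⟨[b], fun _ => Or.inr (Or.inr ⟨l, hl, by simpa using hrule, fun a ha => Or.inl (hlX a ha)⟩),
    List.mem_singleton_self b⟩

end genOp

section RIstar

variable {L : Type*} {C : Set L → Set L}

theorem singleton_mem_RIstar {a : L} (ha : a ∈ C ∅) : [a] ∈ RIstar C :=
  Or.inl ⟨a, ha, rfl⟩

theorem append_mem_RIstar {xs : List L} {y : L} (hxs : xs ≠ []) (hnd : xs.Nodup)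
    (hy : y ∈ C {x | x ∈ xs}) (hy_xs : y ∉ xs) (hy₀ : y ∉ C ∅) : xs ++ [y] ∈ RIstar C :=
  Or.inr ⟨xs, y, hxs, hnd, ⟨hy, fun h => h.elim hy_xs hy₀⟩, rfl⟩

theorem subset_genOp_RIstar_of_finite {A X : Set L} (hA : A.Finite) (hAX : A ⊆ X) :
    C A ⊆ genOp (RIstar C) X := by
  intro x hx
  by_cases hxA : x ∈ A
  · exact subset_genOp (hAX hxA)
  by_cases hx₀ : x ∈ C ∅
  · exact mem_genOp_of_singleton_mem (singleton_mem_RIstar hx₀)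
  set xs := hA.toFinset.toList
  have hxs : {a | a ∈ xs} = A := by ext a; simp [xs]
  have hxs_ne : xs ≠ [] := by
    rintro h
    rw [← hxs, h] at hx
    exact hx₀ (by simpa using hx)
  refine mem_genOp_of_rule hxs_ne ?_ fun a ha => hAX (hxs ▸ ha)
  exact append_mem_RIstar hxs_ne hA.toFinset.nodup_toList (hxs ▸ hx)
    (fun h => hxA (hxs ▸ h)) hx₀

end RIstar

theorem stmt8_general {L : Type*} (C : Set L → Set L)
    (h_fin : ∀ X : Set L, C X = ⋃ A ∈ {A : Set L | A ⊆ X ∧ A.Finite}, C A) :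
    ∀ X : Set L, C X ⊆ genOp (RIstar C) X := by
  intro X
  rw [h_fin X]
  exact Set.iUnion₂_subset fun A ⟨hAX, hA⟩ => subset_genOp_RIstar_of_finite hA hAX

/-- If `C` is a finite consequence operator on `L`, then every `x ∈ C(X)` is
deducible from `X` via the logic-system `RI*` defined from `C`; that is,
`C(X) ⊆ C*(X)` where `C*` is the operator generated by `RI*`. -/
theorem stmt8 {L : Type*} [Nonempty L] (C : Set L → Set L)
    (h_incl : ∀ X : Set L, X ⊆ C X)
    (h_idem : ∀ X : Set L, C (C X) = C X)
    (h_mono : ∀ X Y : Set L, X ⊆ Y → C X ⊆ C Y)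
    (h_fin : ∀ X : Set L, C X = ⋃ A ∈ {A : Set L | A ⊆ X ∧ A.Finite}, C A) :
    ∀ X : Set L, C X ⊆ genOp (RIstar C) X :=
  stmt8_general C h_fin
end

section
/- Let L_N = ℕ and let RI be the general logic-system with empty unary relation and, for each n ≥ 2, the single n-tuple (a₁,…,aₙ) with a_i = n(n−1)/2 − 2 + i for 1 ≤ i ≤ n, and let C be the finite consequence operator generated by RI. Then for each k ≥ 2, letting X_k = {k(k−1)/2 − 2 + i : 1 ≤ i ≤ k−1} (the first k−1 coordinates of the k-th block), one has C(X_k) = {k(k−1)/2 − 2 + i : 1 ≤ i ≤ k}, while for every subset Y ⊆ X_k with |Y| ≤ k−2 one has C(Y) = Y. Moreover C(∅) = ∅. -/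
def blockTuple (n : ℕ) : List ℕ :=
  List.ofFn (fun j : Fin n => n * (n - 1) / 2 - 1 + (j : ℕ))

def blockRI : Set (List ℕ) :=
  {l | ∃ n : ℕ, 2 ≤ n ∧ l = blockTuple n}

lemma aux_single_get {L : Type*} (a : L) (j : Fin ([a].length)) : [a].get j = a := by
  have h : (j : ℕ) = 0 := Nat.lt_one_iff.mp (by simpa using j.isLt)
  simp [List.get_eq_getElem, h]

lemma aux_subset_genOp {L : Type*} (RI : Set (List L)) (X : Set L) : X ⊆ genOp RI X := by
  intro a ha
  refine ⟨[a], ?_, List.mem_singleton_self a⟩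
  intro j
  left
  rw [aux_single_get]
  exact ha

lemma aux_genOp_subset {L : Type*} (RI : Set (List L)) (X S : Set L) (hX : X ⊆ S)
    (hax : ∀ a : L, [a] ∉ RI)
    (hrule : ∀ (l : List L) (b : L), l ≠ [] → l ++ [b] ∈ RI → (∀ x ∈ l, x ∈ S) → b ∈ S) :
    genOp RI X ⊆ S := by
  rintro a ⟨bs, hded, ha⟩
  have key : ∀ m : ℕ, ∀ hm : m < bs.length, bs[m] ∈ S := by
    intro m
    induction m using Nat.strong_induction_on with
    | _ m ih =>
      intro hm
      rcases hded ⟨m, hm⟩ with h | h | ⟨l, hl0, hlRI, hprem⟩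
      · exact hX h
      · exact absurd h (hax _)
      · refine hrule l _ hl0 hlRI ?_
        intro x hx
        rcases hprem x hx with h | h | h
        · exact hX h
        · exact absurd h (hax _)
        · obtain ⟨i, hi, hg⟩ := List.mem_iff_getElem.mp h
          have hi' : i < bs.length ∧ i < m := by
            simp only [List.length_take] at hi; omega
          have heq : (bs.take m)[i] = bs[i]'hi'.1 := List.getElem_take
          rw [heq] at hg
          exact hg ▸ ih i hi'.2 hi'.1
  obtain ⟨i, hi, hg⟩ := List.mem_iff_getElem.mp ha
  exact hg ▸ key i hi

lemma aux_no_axiom (a : ℕ) : [a] ∉ blockRI := by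
  rintro ⟨n, hn, heq⟩
  have := congrArg List.length heq
  simp [blockTuple] at this
  omega

lemma aux_tri_succ (n : ℕ) : (n + 1) * n / 2 = n * (n - 1) / 2 + n := by
  rcases n with _ | m
  · simp
  · have h : (m + 2) * (m + 1) = (m + 1) * m + 2 * (m + 1) := by ring
    rw [show m + 1 + 1 = m + 2 from rfl, h, Nat.add_mul_div_left _ _ (by norm_num)]
    simp

lemma aux_tri_one_le {n : ℕ} (hn : 2 ≤ n) : 1 ≤ n * (n - 1) / 2 := by
  calc 1 ≤ 2 * 1 / 2 := by norm_num
  _ ≤ n * (n - 1) / 2 := Nat.div_le_div_right (Nat.mul_le_mul hn (by omega))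

lemma aux_tri_mono {m k : ℕ} (h : m < k) : m * (m - 1) / 2 + m ≤ k * (k - 1) / 2 := by
  induction k with
  | zero => omega
  | succ k ih =>
    rw [Nat.add_sub_cancel, aux_tri_succ]
    rcases Nat.lt_or_ge m k with h' | h'
    · have := ih h'; omega
    · have hmk : m = k := by omega
      subst hmk; omega

lemma aux_block_unique {n k j₁ j₂ : ℕ} (hn : 2 ≤ n) (hk : 2 ≤ k) (h1 : j₁ < n) (h2 : j₂ < k)
    (heq : n * (n - 1) / 2 - 1 + j₁ = k * (k - 1) / 2 - 1 + j₂) : n = k := by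
  have hn1 := aux_tri_one_le hn
  have hk1 := aux_tri_one_le hk
  rcases lt_trichotomy n k with h | h | h
  · have := aux_tri_mono h; omega
  · exact h
  · have := aux_tri_mono h; omega

lemma aux_rule_struct {l : List ℕ} {b : ℕ} (hl0 : l ≠ []) (h : l ++ [b] ∈ blockRI) :
    ∃ n : ℕ, 2 ≤ n ∧ l.length = n - 1 ∧
      (∀ i : ℕ, ∀ hi : i < l.length, l[i] = n * (n - 1) / 2 - 1 + i) ∧
      b = n * (n - 1) / 2 - 1 + (n - 1) := by
  obtain ⟨n, hn2, heq⟩ := h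
  have hlen : l.length + 1 = n := by
    have := congrArg List.length heq
    simpa [blockTuple] using this
  refine ⟨n, hn2, by omega, ?_, ?_⟩
  · intro i hi
    have hi' : i < (l ++ [b]).length := by simp; omega
    have h2 := List.getElem_of_eq heq hi'
    rw [List.getElem_append_left hi] at h2
    rw [h2]
    simp [blockTuple]
  · have hi' : l.length < (l ++ [b]).length := by simp
    have h2 := List.getElem_of_eq heq hi'
    simp only [blockTuple, List.getElem_ofFn] at h2
    rw [List.getElem_append_right (le_refl _)] at h2
    simp at h2
    omega

/-- For the operator `C` generated by the block logic-system: for each `k ≥ 2`,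
with `X_k` the set of the first `k-1` coordinates of the `k`-th block,
`C(X_k)` is the full `k`-th block, while `C(Y) = Y` for every `Y ⊆ X_k` with
`|Y| ≤ k - 2`; moreover `C(∅) = ∅`. -/
theorem stmt9 :
    (∀ k : ℕ, 2 ≤ k →
      genOp blockRI {a : ℕ | ∃ j : ℕ, j < k - 1 ∧ a = k * (k - 1) / 2 - 1 + j}
          = {a : ℕ | ∃ j : ℕ, j < k ∧ a = k * (k - 1) / 2 - 1 + j} ∧
      ∀ Y : Set ℕ, Y ⊆ {a : ℕ | ∃ j : ℕ, j < k - 1 ∧ a = k * (k - 1) / 2 - 1 + j} →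
        Y.ncard ≤ k - 2 → genOp blockRI Y = Y) ∧
    genOp blockRI (∅ : Set ℕ) = ∅ := by
  constructor
  · intro k hk
    constructor
    · apply Set.Subset.antisymm
      · apply aux_genOp_subset _ _ _ ?_ aux_no_axiom ?_
        · rintro a ⟨j, hj, ha⟩
          exact ⟨j, by omega, ha⟩
        · rintro l b hl0 hlRI hprem
          obtain ⟨n, hn2, hlen, hent, hb⟩ := aux_rule_struct hl0 hlRI
          have h0len : 0 < l.length := List.length_pos_iff.mpr hl0
          have h0 := hprem _ (List.getElem_mem h0len)
          obtain ⟨j, hj, hj'⟩ := h0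
          rw [hent 0 h0len] at hj'
          have hnk : n = k := aux_block_unique hn2 hk (by omega) hj hj'
          exact ⟨n - 1, by omega, by rw [hb, hnk]⟩
      · rintro a ⟨j, hj, ha⟩
        rcases Nat.lt_or_ge j (k - 1) with h | h
        · exact aux_subset_genOp _ _ ⟨j, h, ha⟩
        · have hjk : j = k - 1 := by omega
          subst hjk
          refine ⟨[a], ?_, List.mem_singleton_self a⟩
          intro i
          right; right
          rw [aux_single_get]
          obtain ⟨m, rfl⟩ : ∃ m, k = m + 1 := ⟨k - 1, by omega⟩
          refine ⟨List.ofFn (fun i : Fin m => (m + 1) * ((m + 1) - 1) / 2 - 1 + (i : ℕ)),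
            ?_, ⟨m + 1, by omega, ?_⟩, ?_⟩
          · intro hcon
            have := congrArg List.length hcon
            simp at this
            omega
          · apply List.ext_getElem (by simp [blockTuple])
            intro i h1 h2
            simp only [blockTuple, List.getElem_ofFn]
            rcases Nat.lt_or_ge i m with hi | hi
            · rw [List.getElem_append_left (by simpa using hi)]
              simp
            · have him : i = m := by simp [blockTuple] at h2; omega
              subst him
              rw [List.getElem_append_right (by simp)]
              simp [ha]
          · intro b hb
            left
            obtain ⟨i, hbi⟩ := List.mem_ofFn.mp hb
            exact ⟨i, by have := i.isLt; omega, hbi.symm⟩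
    · intro Y hY hcard
      apply Set.Subset.antisymm
      · apply aux_genOp_subset _ _ _ (fun a ha => ha) aux_no_axiom ?_
        rintro l b hl0 hlRI hprem
        exfalso
        obtain ⟨n, hn2, hlen, hent, hb⟩ := aux_rule_struct hl0 hlRI
        have h0len : 0 < l.length := List.length_pos_iff.mpr hl0
        have h0 := hY (hprem _ (List.getElem_mem h0len))
        obtain ⟨j, hj, hj'⟩ := h0
        rw [hent 0 h0len] at hj'
        have hnk : n = k := aux_block_unique hn2 hk (by omega) (by omega) hj'
        subst hnk
        have hXY : {a : ℕ | ∃ j : ℕ, j < n - 1 ∧ a = n * (n - 1) / 2 - 1 + j} ⊆ Y := by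
          rintro a ⟨j, hj2, rfl⟩
          have hjl : j < l.length := by omega
          have := hprem _ (List.getElem_mem hjl)
          rwa [hent j hjl] at this
        have hXkeq : {a : ℕ | ∃ j : ℕ, j < n - 1 ∧ a = n * (n - 1) / 2 - 1 + j}
            = ↑((Finset.range (n - 1)).image (fun j => n * (n - 1) / 2 - 1 + j)) := by
          ext a
          simp [eq_comm]
        have hXkcard : ({a : ℕ | ∃ j : ℕ, j < n - 1 ∧ a = n * (n - 1) / 2 - 1 + j}).ncard
            = n - 1 := by
          rw [hXkeq, Set.ncard_coe_finset,
            Finset.card_image_of_injective _ (add_right_injective _), Finset.card_range]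
        have hfin : Y.Finite := by
          apply Set.Finite.subset _ hY
          rw [hXkeq]
          exact Finset.finite_toSet _
        have := Set.ncard_le_ncard hXY hfin
        omega
      · exact aux_subset_genOp _ _
  · rw [Set.eq_empty_iff_forall_notMem]
    intro a ha
    refine aux_genOp_subset blockRI ∅ ∅ (fun _ h => h) aux_no_axiom ?_ ha
    rintro l b hl0 hlRI hprem
    exact absurd (hprem _ (List.getElem_mem (List.length_pos_iff.mpr hl0))) (fun h => h)
end
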